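/- Let 0 < θ < 1 and φ(z) = |z|² on ℂ^d. Define V(z) = θ log|z| + θ/2 - (θ/2)log(θ/2) for |z| < √(θ/2); V(z) = |z|² for √(θ/2) ≤ |z| ≤ √(1/2); V(z) = log|z| + 1/2 - (1/2)log(1/2) for |z| ≥ √(1/2). Then V is continuous on ℂ^d \ {0}, V ≤ φ on ℂ^d, and V belongs to the class L_θ. -/

import Mathlib

open MeasureTheory Filter Topology

noncomputable section

/-- Extended-real logarithm: `elog x = log x` for `x > 0` and `-∞` for `x ≤ 0`. -/
def elog (x : ℝ) : EReal := if x ≤ 0 then ⊥ else ((Real.log x : ℝ) : EReal)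

/-- `u : ℂ^d → [-∞, ∞)` is plurisubharmonic: upper semicontinuous, never `+∞`, and
the truncations `max(u, -n)` satisfy the sub-mean value inequality on every circle
inside every complex line (this characterizes plurisubharmonicity, since
`max(u, -n)` is psh and decreases to `u`). -/
def IsPSH {d : ℕ} (u : EuclideanSpace ℂ (Fin d) → EReal) : Prop :=
  UpperSemicontinuous u ∧ (∀ z, u z ≠ ⊤) ∧
  ∀ (a b : EuclideanSpace ℂ (Fin d)) (r : ℝ), 0 < r → ∀ n : ℕ,
    u a ≤ (((2 * Real.pi)⁻¹ * ∫ t in (0:ℝ)..(2 * Real.pi),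
      (u (a + ((r : ℂ) * Complex.exp (t * Complex.I)) • b) ⊔ ((-(n : ℝ) : ℝ) : EReal)).toReal : ℝ) : EReal)

/-- The Lelong class `L`: psh functions with `u(z) ≤ log⁺|z| + C`. -/
def MemL {d : ℕ} (u : EuclideanSpace ℂ (Fin d) → EReal) : Prop :=
  IsPSH u ∧ ∃ C : ℝ, ∀ z, u z ≤ ((max 0 (Real.log ‖z‖) + C : ℝ) : EReal)

/-- The class `L_θ`: functions in `L` with `u(z) ≤ θ log|z| + C` on the unit ball. -/
def MemLtheta {d : ℕ} (θ : ℝ) (u : EuclideanSpace ℂ (Fin d) → EReal) : Prop :=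
  MemL u ∧ ∃ C : ℝ, ∀ z, ‖z‖ < 1 → u z ≤ (θ : EReal) * elog ‖z‖ + ((C : ℝ) : EReal)

/-- A set is pluripolar if it is contained in the `-∞` locus of a psh function
not identically `-∞`. -/
def Pluripolar {d : ℕ} (E : Set (EuclideanSpace ℂ (Fin d))) : Prop :=
  ∃ u : EuclideanSpace ℂ (Fin d) → EReal,
    IsPSH u ∧ (∃ z, u z ≠ ⊥) ∧ E ⊆ {z | u z = ⊥}

/-- An admissible weight on a closed set `K`: upper semicontinuous, nonnegative,
`{w > 0}` non-pluripolar, and `|z| w(z) → 0` as `|z| → ∞` in `K`. -/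
def AdmissibleWeight {d : ℕ} (K : Set (EuclideanSpace ℂ (Fin d)))
    (w : EuclideanSpace ℂ (Fin d) → ℝ) : Prop :=
  UpperSemicontinuousOn w K ∧ (∀ z ∈ K, 0 ≤ w z) ∧
  ¬ Pluripolar {z | z ∈ K ∧ 0 < w z} ∧
  ∀ ε > (0:ℝ), ∃ R : ℝ, ∀ z ∈ K, R ≤ ‖z‖ → ‖z‖ * w z < ε

/-- The weighted `θ`-incomplete extremal function
`V_{K,Q,θ}(z) = sup {u(z) : u ∈ L_θ, u ≤ Q on K}`. -/
def VKQtheta {d : ℕ} (K : Set (EuclideanSpace ℂ (Fin d)))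
    (Q : EuclideanSpace ℂ (Fin d) → ℝ) (θ : ℝ) (z : EuclideanSpace ℂ (Fin d)) : EReal :=
  ⨆ u ∈ {u : EuclideanSpace ℂ (Fin d) → EReal |
      MemLtheta θ u ∧ ∀ w ∈ K, u w ≤ ((Q w : ℝ) : EReal)}, u z

end

open Classical

/-- The candidate `θ`-incomplete extremal function for `φ(z) = |z|²` (`0 < θ < 1`),
with value `-∞` at the origin (where `θ log|z| = -∞`). -/
noncomputable def V15 {d : ℕ} (θ : ℝ) (z : EuclideanSpace ℂ (Fin d)) : EReal :=
  if z = 0 then ⊥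
  else if ‖z‖ < Real.sqrt (θ / 2) then
    ((θ * Real.log ‖z‖ + θ / 2 - (θ / 2) * Real.log (θ / 2) : ℝ) : EReal)
  else if ‖z‖ ≤ Real.sqrt (1 / 2) then ((‖z‖ ^ 2 : ℝ) : EReal)
  else ((Real.log ‖z‖ + 1 / 2 - (1 / 2) * Real.log (1 / 2) : ℝ) : EReal)

/-!
In logarithmic coordinates `V15 θ z = g (log ‖z‖)`, where the profile `g` is the upper envelope of
the tangent lines `s x + s/2 - (s/2) log (s/2)` of `x ↦ exp (2x)` with slopes `s ∈ [θ, 1]`, the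
envelope being attained at every point. Each `s log ‖z‖ + c` satisfies the sub-mean value inequality
on complex lines: for `a ≠ 0` the map `ζ ↦ ⟪a, a + ζ b⟫` is affine, so Jensen's formula bounds the
circle average of its `log |·|` below by `2 log ‖a‖`, and Cauchy–Schwarz transfers this to
`log ‖a + ζ b‖`. The tangent line touching at `log ‖a‖` then gives the inequality for `V15 θ` at `a`.
Slopes in `[θ, 1]` give the growth conditions of `L_θ`, and tangent lines lie below `exp (2x)`,
which gives `V ≤ |z|²`.
-/

open Real Filter Topology Metric

theorem AnalyticOnNhd.log_norm_le_circleAverage_log_norm {f : ℂ → ℂ} {c : ℂ} {R : ℝ}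
    (hR : R ≠ 0) (hf : AnalyticOnNhd ℂ f (closedBall c |R|)) (hfc : f c ≠ 0) :
    Real.log ‖f c‖ ≤ circleAverage (Real.log ‖f ·‖) c R := by
  -- in Jensen's formula every zero in the disc contributes a nonnegative term
  rw [hf.circleAverage_log_norm hR hfc]
  refine le_add_of_nonneg_left (finsum_nonneg fun u ↦ ?_)
  by_cases hu : u ∈ closedBall c |R|
  · refine mul_nonneg (mod_cast MeromorphicOn.AnalyticOnNhd.divisor_nonneg hf u) ?_
    rcases eq_or_ne u c with rfl | huc
    · simp
    rw [← log_abs]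
    apply log_nonneg
    have : 0 < ‖c - u‖ := norm_pos_iff.mpr (sub_ne_zero.mpr huc.symm)
    rw [mem_closedBall, dist_eq_norm'] at hu
    rw [abs_mul, abs_inv, abs_norm, ← div_eq_mul_inv, one_le_div this]
    exact hu
  · simp [hu]

theorem circleAverage_mono_of_eventually_codiscreteWithin {f₁ f₂ : ℂ → ℝ} {c : ℂ} {R : ℝ}
    (hR : R ≠ 0) (hf₁ : CircleIntegrable f₁ c R) (hf₂ : CircleIntegrable f₂ c R)
    (h : ∀ᶠ z in codiscreteWithin (sphere c |R|), f₁ z ≤ f₂ z) :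
    circleAverage f₁ c R ≤ circleAverage f₂ c R := by
  rw [circleAverage_congr_codiscreteWithin (f₂ := f₁ ⊓ f₂) (h.mono fun z hz ↦ ?_) hR]
  · exact circleAverage_mono ⟨hf₁.1.inf hf₂.1, hf₁.2.inf hf₂.2⟩ hf₂ fun z _ ↦ inf_le_right
  · exact (inf_of_le_left hz).symm

theorem continuous_log_max_exp {X : Type*} [TopologicalSpace X] {f : X → ℝ} (hf : Continuous f)
    (K : ℝ) : Continuous fun x ↦ log (max (f x) (exp K)) :=
  (hf.max continuous_const).log fun _ ↦ (lt_max_of_lt_right (exp_pos K)).ne'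

theorem log_norm_le_circleAverage_log_max_norm_add_smul {E : Type*} [NormedAddCommGroup E]
    [InnerProductSpace ℂ E] {a : E} (ha : a ≠ 0) (b : E) {r : ℝ} (hr : r ≠ 0) (K : ℝ) :
    log ‖a‖ ≤ circleAverage (fun ζ ↦ log (max ‖a + ζ • b‖ (exp K))) 0 r := by
  set f : ℂ → ℂ := fun ζ ↦ inner ℂ a (a + ζ • b)
  have hf : AnalyticOnNhd ℂ f Set.univ := by
    have : f = fun ζ ↦ inner ℂ a a + ζ * inner ℂ a b := by
      ext ζ
      simp [f]
    rw [this]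
    exact fun ζ _ ↦ by fun_prop
  have hf0 : f 0 ≠ 0 := by simpa [f] using ha
  have hna : 0 < ‖a‖ := norm_pos_iff.mpr ha
  have hpos : ∀ ζ : ℂ, 0 < max ‖a + ζ • b‖ (exp K) := fun ζ ↦ lt_max_of_lt_right (exp_pos K)
  have hint : CircleIntegrable (fun ζ ↦ log (max ‖a + ζ • b‖ (exp K))) 0 r :=
    (continuous_log_max_exp (by fun_prop) K).continuousOn.circleIntegrable'
  have hjensen :=
    AnalyticOnNhd.log_norm_le_circleAverage_log_norm hr (hf.mono (Set.subset_univ _)) hf0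
  have hcompare : circleAverage (log ‖f ·‖) 0 r ≤
      circleAverage (fun ζ ↦ log ‖a‖ + log (max ‖a + ζ • b‖ (exp K))) 0 r := by
    refine circleAverage_mono_of_eventually_codiscreteWithin hr
      ((hf.mono (Set.subset_univ _)).meromorphicOn.circleIntegrable_log_norm)
      ((circleIntegrable_const _ _ _).add hint) ?_
    filter_upwards [codiscreteWithin_mono (Set.subset_univ _)
      (hf.preimage_zero_mem_codiscrete hf0)] with ζ hζ
    have hζ' : 0 < ‖f ζ‖ := norm_pos_iff.mpr hζ
    rw [← log_mul hna.ne' (hpos ζ).ne']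
    refine log_le_log hζ' ((norm_inner_le_norm a _).trans ?_)
    gcongr
    exact le_max_left _ _
  rw [circleAverage_fun_add (circleIntegrable_const _ _ _) hint, circleAverage_const] at hcompare
  have : log ‖f 0‖ = 2 * log ‖a‖ := by
    simp [f, inner_self_eq_norm_sq_to_K, log_pow]
  linarith

section LogRadial

variable {E : Type*} [NormedAddCommGroup E] {g : ℝ → ℝ}

noncomputable def logRadial (g : ℝ → ℝ) (z : E) : EReal :=
  if z = 0 then ⊥ else (g (log ‖z‖) : EReal)

@[simp]
theorem logRadial_zero : logRadial g (0 : E) = ⊥ := if_pos rfl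

theorem logRadial_of_ne_zero {z : E} (hz : z ≠ 0) : logRadial g z = g (log ‖z‖) := if_neg hz

theorem logRadial_ne_top (z : E) : logRadial g z ≠ ⊤ := by
  unfold logRadial
  split_ifs <;> simp

theorem logRadial_le {z : E} {y : EReal} (h : z ≠ 0 → (g (log ‖z‖) : EReal) ≤ y) :
    logRadial g z ≤ y := by
  rcases eq_or_ne z 0 with rfl | hz
  · simp
  · exact logRadial_of_ne_zero hz ▸ h hz

theorem continuous_logRadial (hg : Continuous g) (hg_bot : Tendsto g atBot atBot) :
    Continuous (logRadial g : E → EReal) := by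
  refine continuous_iff_continuousAt.2 fun z ↦ ?_
  rcases eq_or_ne z 0 with rfl | hz
  · rw [← continuousWithinAt_compl_self, ContinuousWithinAt, logRadial_zero]
    refine (EReal.tendsto_coe_atBot.comp (hg_bot.comp
      (tendsto_log_nhdsGT_zero.comp tendsto_norm_nhdsNE_zero))).congr' ?_
    filter_upwards [self_mem_nhdsWithin] with w hw
    exact (logRadial_of_ne_zero hw).symm
  · refine (continuous_coe_real_ereal.continuousAt.comp (hg.continuousAt.comp
      (continuous_norm.continuousAt.log (norm_ne_zero_iff.2 hz)))).congr ?_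
    filter_upwards [isOpen_ne.mem_nhds hz] with w hw
    exact (logRadial_of_ne_zero hw).symm

variable [InnerProductSpace ℂ E]

theorem logRadial_le_circleAverage (hu : Continuous (logRadial g : E → EReal))
    (hg : ∀ x₀, ∃ s c, 0 < s ∧ (∀ x, s * x + c ≤ g x) ∧ g x₀ = s * x₀ + c)
    (a b : E) {r : ℝ} (hr : r ≠ 0) (m : ℝ) :
    logRadial g a ≤
      circleAverage (fun ζ ↦ (logRadial g (a + ζ • b) ⊔ (m : EReal)).toReal) 0 r := by
  rcases eq_or_ne a 0 with rfl | ha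
  · simp
  obtain ⟨s, c, hs, hle, heq⟩ := hg (log ‖a‖)
  -- `log (max ‖w‖ (exp K))` is `max (log ‖w‖) K` read with `log 0 = -∞` (unlike Lean's
  -- `log 0 = 0`), so `s * T ζ + c` is the supporting line truncated at `m`
  set K := (m - c) / s with hK
  set T : ℂ → ℝ := fun ζ ↦ log (max ‖a + ζ • b‖ (exp K))
  set F : ℂ → ℝ := fun ζ ↦ (logRadial g (a + ζ • b) ⊔ (m : EReal)).toReal
  have hT : CircleIntegrable T 0 r :=
    (continuous_log_max_exp (by fun_prop) K).continuousOn.circleIntegrable'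
  have hF : CircleIntegrable F 0 r := by
    refine (EReal.continuousOn_toReal.comp_continuous
      ((hu.comp (by fun_prop)).max continuous_const) fun ζ ↦ ?_).continuousOn.circleIntegrable'
    simp [logRadial_ne_top]
  have hsT : CircleIntegrable (fun ζ ↦ s * T ζ) 0 r := hT.const_mul s
  have hTF : ∀ ζ, s * T ζ + c ≤ F ζ := by
    intro ζ
    rcases le_or_gt ‖a + ζ • b‖ (exp K) with h | h
    · have hm : m = s * K + c := by rw [hK]; field_simp; ring
      simp only [T, F, max_eq_right h, log_exp, ← hm]
      simpa using EReal.toReal_le_toReal (le_sup_right (a := logRadial g (a + ζ • b)))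
        (EReal.coe_ne_bot m) (by simp [logRadial_ne_top])
    · have hw : a + ζ • b ≠ 0 := norm_pos_iff.1 ((exp_pos K).trans h)
      simp only [T, F, max_eq_left h.le, logRadial_of_ne_zero hw,
        ← EReal.coe_strictMono.monotone.map_max, EReal.toReal_coe]
      exact (hle _).trans (le_max_left _ _)
  rw [logRadial_of_ne_zero ha, heq, EReal.coe_le_coe_iff]
  calc s * log ‖a‖ + c ≤ s * circleAverage T 0 r + c := by
        gcongr
        exact log_norm_le_circleAverage_log_max_norm_add_smul ha b hr K
    _ = circleAverage (fun ζ ↦ s * T ζ + c) 0 r := by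
        rw [circleAverage_fun_add hsT (circleIntegrable_const c 0 r), circleAverage_const]
        exact congrArg (· + c) (circleAverage_fun_smul (a := s) (f := T)).symm
    _ ≤ circleAverage F 0 r :=
        circleAverage_mono (hsT.add (circleIntegrable_const c 0 r)) hF
          fun ζ _ ↦ hTF ζ

end LogRadial

theorem isPSH_logRadial {d : ℕ} {g : ℝ → ℝ} (hg : Continuous g) (hg_bot : Tendsto g atBot atBot)
    (hg_supp : ∀ x₀, ∃ s c, 0 < s ∧ (∀ x, s * x + c ≤ g x) ∧ g x₀ = s * x₀ + c) :
    IsPSH (logRadial g : EuclideanSpace ℂ (Fin d) → EReal) := by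
  have hu := continuous_logRadial (E := EuclideanSpace ℂ (Fin d)) hg hg_bot
  refine ⟨hu.upperSemicontinuous, logRadial_ne_top, fun a b r hr n ↦ ?_⟩
  convert logRadial_le_circleAverage hu hg_supp a b hr.ne' (-n) using 2
  simp [circleAverage_def, circleMap]

/-- The tangent line of slope `s` to `x ↦ exp (2 * x)`; it touches at `x = log (s / 2) / 2`. -/
noncomputable def expTangent (s x : ℝ) : ℝ := s * x + s / 2 - s / 2 * log (s / 2)

@[fun_prop]
theorem continuous_expTangent (s : ℝ) : Continuous (expTangent s) := by
  unfold expTangent; fun_prop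

theorem expTangent_eq_add (s x : ℝ) : expTangent s x = s * x + expTangent s 0 := by
  unfold expTangent; ring

theorem expTangent_le_exp {s : ℝ} (hs : 0 < s) (x : ℝ) : expTangent s x ≤ exp (2 * x) := by
  have h := add_one_le_exp (2 * x - log (s / 2))
  rw [exp_sub, exp_log (by positivity), le_div_iff₀ (by positivity)] at h
  unfold expTangent
  linarith

theorem exp_two_mul_log {x : ℝ} (hx : 0 < x) : exp (2 * log x) = x ^ 2 := by
  rw [two_mul, exp_add, exp_log hx, sq]

theorem exp_two_mul_log_div_two {s : ℝ} (hs : 0 < s) : exp (2 * (log (s / 2) / 2)) = s / 2 := by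
  rw [mul_div_cancel₀ _ two_ne_zero, exp_log (by positivity)]

theorem expTangent_tangency (s : ℝ) : expTangent s (log (s / 2) / 2) = s / 2 := by
  unfold expTangent; ring

theorem expTangent_le_expTangent {s t x : ℝ} (hs : 0 < s) (ht : 0 < t)
    (h : (s - t) * (x - log (t / 2) / 2) ≤ 0) : expTangent s x ≤ expTangent t x := by
  have h₁ := expTangent_le_exp hs (log (t / 2) / 2)
  rw [exp_two_mul_log_div_two ht] at h₁
  unfold expTangent at *
  linarith

namespace V15

noncomputable def profile (θ x : ℝ) : ℝ :=
  if x < log (θ / 2) / 2 then expTangent θ x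
  else if x ≤ log (1 / 2) / 2 then exp (2 * x)
  else expTangent 1 x

variable {θ : ℝ}

theorem expTangent_le_profile (hθ : 0 < θ) {s : ℝ} (hs : s ∈ Set.Icc θ 1) (x : ℝ) :
    expTangent s x ≤ profile θ x := by
  have hs₀ : 0 < s := hθ.trans_le hs.1
  unfold profile
  split_ifs with h₁ h₂
  · exact expTangent_le_expTangent hs₀ hθ
      (mul_nonpos_of_nonneg_of_nonpos (sub_nonneg.2 hs.1) (by linarith))
  · exact expTangent_le_exp hs₀ x
  · exact expTangent_le_expTangent hs₀ one_pos
      (mul_nonpos_of_nonpos_of_nonneg (sub_nonpos.2 hs.2) (by linarith))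

theorem exists_profile_eq_expTangent (hθ : 0 < θ) (hθ₁ : θ ≤ 1) (x : ℝ) :
    ∃ s ∈ Set.Icc θ 1, profile θ x = expTangent s x := by
  unfold profile
  split_ifs with h₁ h₂
  · exact ⟨θ, ⟨le_rfl, hθ₁⟩, rfl⟩
  · refine ⟨2 * exp (2 * x), ⟨?_, ?_⟩, ?_⟩
    · have := exp_le_exp.2 (by linarith : log (θ / 2) ≤ 2 * x)
      rw [exp_log (by positivity)] at this
      linarith
    · have := exp_le_exp.2 (by linarith : 2 * x ≤ log (1 / 2))
      rw [exp_log (by positivity)] at this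
      linarith
    · unfold expTangent
      rw [mul_div_cancel_left₀ _ two_ne_zero, log_exp]
      ring
  · exact ⟨1, ⟨hθ₁, le_rfl⟩, rfl⟩

theorem continuous_profile (hθ : 0 < θ) (hθ₁ : θ ≤ 1) : Continuous (profile θ) := by
  have hlog : log (θ / 2) / 2 ≤ log (1 / 2) / 2 := by gcongr
  unfold profile
  simp only [← not_le, ite_not]
  refine Continuous.if_le ?_ (by fun_prop) continuous_const continuous_id fun x hx ↦ ?_
  · refine Continuous.if_le (by fun_prop) (by fun_prop) continuous_id continuous_const
      fun x hx ↦ ?_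
    rw [hx, exp_two_mul_log_div_two one_pos, expTangent_tangency]
  · rw [← hx, if_pos hlog, exp_two_mul_log_div_two hθ, expTangent_tangency]

theorem profile_le_exp (hθ : 0 < θ) (hθ₁ : θ ≤ 1) (x : ℝ) : profile θ x ≤ exp (2 * x) := by
  obtain ⟨s, hs, h⟩ := exists_profile_eq_expTangent hθ hθ₁ x
  exact h ▸ expTangent_le_exp (hθ.trans_le hs.1) x

theorem profile_le_max_add_one (hθ : 0 < θ) (hθ₁ : θ ≤ 1) (x : ℝ) :
    profile θ x ≤ max 0 x + 1 := by
  obtain ⟨s, hs, h⟩ := exists_profile_eq_expTangent hθ hθ₁ x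
  have h₀ := expTangent_le_exp (hθ.trans_le hs.1) 0
  rw [mul_zero, exp_zero] at h₀
  rw [h, expTangent_eq_add]
  rcases le_total x 0 with hx | hx
  · nlinarith [le_max_left 0 x, hθ.trans_le hs.1]
  · nlinarith [le_max_right 0 x, hs.2]

theorem profile_le_mul_add_one (hθ : 0 < θ) (hθ₁ : θ ≤ 1) {x : ℝ} (hx : x ≤ 0) :
    profile θ x ≤ θ * x + 1 := by
  obtain ⟨s, hs, h⟩ := exists_profile_eq_expTangent hθ hθ₁ x
  have h₀ := expTangent_le_exp (hθ.trans_le hs.1) 0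
  rw [mul_zero, exp_zero] at h₀
  rw [h, expTangent_eq_add]
  nlinarith [hs.1]

theorem tendsto_profile_atBot (hθ : 0 < θ) (hθ₁ : θ ≤ 1) : Tendsto (profile θ) atBot atBot := by
  refine tendsto_atBot_mono' atBot ?_
    (tendsto_atBot_add_const_right _ 1 (tendsto_id.const_mul_atBot hθ))
  filter_upwards [eventually_le_atBot 0] with x hx
  exact profile_le_mul_add_one hθ hθ₁ hx

theorem exists_supporting_line_profile (hθ : 0 < θ) (hθ₁ : θ ≤ 1) (x₀ : ℝ) :
    ∃ s c, 0 < s ∧ (∀ x, s * x + c ≤ profile θ x) ∧ profile θ x₀ = s * x₀ + c := by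
  obtain ⟨s, hs, h⟩ := exists_profile_eq_expTangent hθ hθ₁ x₀
  refine ⟨s, expTangent s 0, hθ.trans_le hs.1, fun x ↦ ?_, h.trans (expTangent_eq_add s x₀)⟩
  exact expTangent_eq_add s x ▸ expTangent_le_profile hθ hs x

theorem eq_logRadial {d : ℕ} (hθ : 0 < θ) : V15 (d := d) θ = logRadial (profile θ) := by
  funext z
  rcases eq_or_ne z 0 with rfl | hz
  · simp [V15]
  have hn : 0 < ‖z‖ := norm_pos_iff.2 hz
  have h₁ : ‖z‖ < √(θ / 2) ↔ log ‖z‖ < log (θ / 2) / 2 := by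
    rw [← log_sqrt (by positivity), log_lt_log_iff hn (by positivity)]
  have h₂ : ‖z‖ ≤ √(1 / 2) ↔ log ‖z‖ ≤ log (1 / 2) / 2 := by
    rw [← log_sqrt (by positivity), log_le_log_iff hn (by positivity)]
  rw [logRadial_of_ne_zero hz, V15, if_neg hz, profile]
  simp only [h₁, h₂, exp_two_mul_log hn, expTangent, one_mul]
  split_ifs <;> rfl

end V15

/-- For `0 < θ < 1` and `φ(z) = |z|²`, the piecewise function `V` (equal to
`θ log|z| + θ/2 - (θ/2)log(θ/2)` for `|z| < √(θ/2)`, `|z|²` for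
`√(θ/2) ≤ |z| ≤ √(1/2)`, and `log|z| + 1/2 - (1/2)log(1/2)` for `|z| ≥ √(1/2)`)
is continuous on `ℂ^d \ {0}`, satisfies `V ≤ φ` on `ℂ^d`, and belongs to `L_θ`. -/
theorem V15_properties {d : ℕ} (θ : ℝ) (hθ0 : 0 < θ) (hθ1 : θ < 1) :
    ContinuousOn (V15 (d := d) θ) {z | z ≠ 0} ∧
    (∀ z : EuclideanSpace ℂ (Fin d), V15 θ z ≤ ((‖z‖ ^ 2 : ℝ) : EReal)) ∧
    MemLtheta θ (V15 (d := d) θ) := by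
  have hθ₁ := hθ1.le
  have hcont := V15.continuous_profile hθ0 hθ₁
  have hbot := V15.tendsto_profile_atBot hθ0 hθ₁
  rw [V15.eq_logRadial hθ0]
  refine ⟨(continuous_logRadial hcont hbot).continuousOn, fun z ↦ logRadial_le fun hz ↦ ?_,
    ⟨isPSH_logRadial hcont hbot (V15.exists_supporting_line_profile hθ0 hθ₁), 1,
      fun z ↦ logRadial_le fun _ ↦ ?_⟩, 1, fun z hz₁ ↦ logRadial_le fun hz ↦ ?_⟩
  · rw [EReal.coe_le_coe_iff, ← exp_two_mul_log (norm_pos_iff.2 hz)]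
    exact V15.profile_le_exp hθ0 hθ₁ _
  · exact EReal.coe_le_coe_iff.2 (V15.profile_le_max_add_one hθ0 hθ₁ _)
  · rw [elog, if_neg (norm_pos_iff.2 hz).not_ge, ← EReal.coe_mul, ← EReal.coe_add,
      EReal.coe_le_coe_iff]
    exact V15.profile_le_mul_add_one hθ0 hθ₁ (log_neg (norm_pos_iff.2 hz) hz₁).le
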